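/- arXiv:0906.4409 — 2 statements merged into one kernel-verified Lean document; each statement's English description precedes it below -/
import Mathlib

section
/- Let θ ∈ ℝ, 0 < η < 1, α = π/(2η), G(1,θ,η) = {z ∈ ℂ : 0 < |z| < 1 and |arg(z e^{−iθ})| < η}, let ζ : G(1,θ,η) → {|ζ| < 1} be the conformal map ζ(z) = (u² + 2u − 1)/(u² − 2u − 1), u = (z e^{−iθ})^α (principal branch), and let z = z(ζ) be its inverse. Let w be any function on G(1,θ,η) (with values in ℂ, or in the Riemann sphere) and let a be any value. Then for every r with 1/2 < r < 1, the number of points of the set {z : 1/2 < |z| < r, |arg(z e^{−iθ})| < η/2, w(z) = a} does not exceed the number of points of the set {ζ : |ζ| < 1 − 2^{−π/(2η) − π/2}(1 − r), w(z(ζ)) = a}; i.e., the map ζ injects the first solution set into the second. -/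
open Complex

/-- The sector `G(1,θ,η) = {z : 0 < |z| < 1, |arg (z e^{-iθ})| < η}`. -/
def sector (θ η : ℝ) : Set ℂ :=
  {z : ℂ | 0 < ‖z‖ ∧ ‖z‖ < 1 ∧
    |Complex.arg (z * Complex.exp (-(θ : ℂ) * Complex.I))| < η}

/-- The map `ζ(z) = (u² + 2u - 1)/(u² - 2u - 1)` where `u = (z e^{-iθ})^α`,
`α = π/(2η)`, with the principal branch power. -/
noncomputable def sectorMap (θ η : ℝ) (z : ℂ) : ℂ :=
  let u : ℂ := (z * Complex.exp (-(θ : ℂ) * Complex.I)) ^ ((Real.pi / (2 * η) : ℝ) : ℂ)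
  (u ^ 2 + 2 * u - 1) / (u ^ 2 - 2 * u - 1)

/-!
Write `u = (z e^{-iθ})^α`. On the truncated half-angle sector, `|arg u| < π/4` and
`2^{-α} < |u| < |z| < r`, so `Re u ≥ |u|/√2`. With `N = u² + 2u - 1` and
`D = u² - 2u - 1` one has `|D|² - |N|² = 8 Re u (1 - |u|²)` and, in the quarter-disk,
`|D|² ≤ 6`; hence `1 - |ζ| ≥ (|D|² - |N|²)/12 = (2/3) Re u (1 - |u|²)`, which exceeds
`2^{-α} (√2/3) (1 - r)`, and `√2/3 > 2^{-π/2}`.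
-/

open Real

lemma two_rpow_neg_pi_div_two_lt : (2 : ℝ) ^ (-(π / 2)) < √2 / 3 := by
  have hsqrt : √2 ^ 2 = 2 := Real.sq_sqrt (by norm_num)
  have h32 : (2 : ℝ) ^ (-(3 / 2) : ℝ) = (2 * √2)⁻¹ := by
    rw [Real.rpow_neg (by norm_num), show (3 / 2 : ℝ) = 1 + 1 / 2 by norm_num,
      Real.rpow_add (by norm_num), Real.rpow_one, ← Real.sqrt_eq_rpow]
  calc (2 : ℝ) ^ (-(π / 2)) < (2 : ℝ) ^ (-(3 / 2) : ℝ) :=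
        Real.rpow_lt_rpow_of_exponent_lt (by norm_num) (by linarith [Real.pi_gt_three])
    _ = (2 * √2)⁻¹ := h32
    _ < √2 / 3 := by
        rw [inv_lt_iff_one_lt_mul₀ (by positivity)]
        nlinarith

lemma sub_sq_div_twelve_le_one_sub_div {a b : ℝ} (ha : 0 ≤ a) (hb : 0 ≤ b)
    (hab : a ^ 2 ≤ b ^ 2) (hb6 : b ^ 2 ≤ 6) : (b ^ 2 - a ^ 2) / 12 ≤ 1 - a / b := by
  rcases hb.eq_or_lt with rfl | hb
  · have : a = 0 := by nlinarith
    simp [this]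
  have hba : a ≤ b := (pow_le_pow_iff_left₀ ha hb.le two_ne_zero).1 hab
  rw [one_sub_div hb.ne', div_le_div_iff₀ (by norm_num) hb]
  nlinarith [mul_nonneg (sub_nonneg.2 hba) (by nlinarith : 0 ≤ 12 - b * (b + a))]

namespace Complex

lemma sqrt_two_div_two_mul_norm_le_re_cpow {x : ℂ} {y : ℝ} (h : |arg x * y| ≤ π / 4) :
    √2 / 2 * ‖x ^ (y : ℂ)‖ ≤ (x ^ (y : ℂ)).re := by
  have hcos : √2 / 2 ≤ Real.cos (arg x * y) := by
    rw [← Real.cos_abs, ← Real.cos_pi_div_four]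
    exact Real.cos_le_cos_of_nonneg_of_le_pi (abs_nonneg _) (by linarith [Real.pi_pos]) h
  rw [cpow_ofReal_re, norm_cpow_real, mul_comm]
  exact mul_le_mul_of_nonneg_left hcos (by positivity)

lemma abs_im_le_re_of_sqrt_two_div_two_mul_norm_le_re {u : ℂ} (h : √2 / 2 * ‖u‖ ≤ u.re) :
    |u.im| ≤ u.re := by
  have hsqrt : √2 ^ 2 = 2 := Real.sq_sqrt (by norm_num)
  have hnorm : ‖u‖ ^ 2 = u.re ^ 2 + u.im ^ 2 := by
    rw [Complex.sq_norm, normSq_apply]; ring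
  have hre : 0 ≤ u.re := le_trans (by positivity) h
  have : u.im ^ 2 ≤ u.re ^ 2 := by
    nlinarith [mul_le_mul h h (by positivity) hre]
  exact abs_le_of_sq_le_sq this hre

lemma normSq_sub_normSq_quadratic (u : ℂ) :
    normSq (u ^ 2 - 2 * u - 1) - normSq (u ^ 2 + 2 * u - 1) = 8 * u.re * (1 - normSq u) := by
  simp only [normSq_apply, pow_two, add_re, add_im, sub_re, sub_im, mul_re, mul_im, one_re,
    one_im, re_ofNat, im_ofNat]
  ring

lemma normSq_sq_sub_two_mul_sub_one_le_six {u : ℂ} (hsec : |u.im| ≤ u.re) (hu : ‖u‖ ≤ 1) :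
    normSq (u ^ 2 - 2 * u - 1) ≤ 6 := by
  have hs : u.re ^ 2 + u.im ^ 2 ≤ 1 := by
    have := Complex.sq_norm u
    rw [normSq_apply] at this
    nlinarith [norm_nonneg u]
  have hre : u.re ≤ 1 := (re_le_norm u).trans hu
  have hsq : u.im ^ 2 ≤ u.re ^ 2 := sq_le_sq' (abs_le.1 hsec).1 (abs_le.1 hsec).2
  have hD : normSq (u ^ 2 - 2 * u - 1)
      = (u.re ^ 2 - u.im ^ 2 - 2 * u.re - 1) ^ 2 + (2 * u.re * u.im - 2 * u.im) ^ 2 := by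
    simp only [normSq_apply, pow_two, sub_re, sub_im, mul_re, mul_im, one_re, one_im, re_ofNat,
      im_ofNat]
    ring
  rw [hD]
  nlinarith [mul_nonneg (sub_nonneg.2 hs)
    (by nlinarith : 0 ≤ 5 + (u.re ^ 2 + u.im ^ 2) - 4 * u.re)]

lemma two_div_three_mul_re_mul_le_one_sub_norm {u : ℂ} (hsec : |u.im| ≤ u.re)
    (hu : ‖u‖ ≤ 1) :
    2 / 3 * u.re * (1 - ‖u‖ ^ 2) ≤ 1 - ‖(u ^ 2 + 2 * u - 1) / (u ^ 2 - 2 * u - 1)‖ := by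
  have hdiff := normSq_sub_normSq_quadratic u
  have hpos : 0 ≤ 8 * u.re * (1 - normSq u) := by
    rw [← Complex.sq_norm]
    have hre : 0 ≤ u.re := (abs_nonneg _).trans hsec
    have hnorm : ‖u‖ ^ 2 ≤ 1 := pow_le_one₀ (norm_nonneg u) hu
    exact mul_nonneg (by positivity) (sub_nonneg.2 hnorm)
  rw [norm_div]
  convert sub_sq_div_twelve_le_one_sub_div (norm_nonneg _) (norm_nonneg _) ?_ ?_ using 1
  · simp only [Complex.sq_norm]; rw [hdiff]; ring
  · rw [Complex.sq_norm, Complex.sq_norm]; linarith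
  · rw [Complex.sq_norm]; exact normSq_sq_sub_two_mul_sub_one_le_six hsec hu

end Complex

lemma norm_sectorMap_lt {θ η r : ℝ} (hη1 : η < 1) (hr1 : r < 1) {z : ℂ}
    (hz1 : 1 / 2 < ‖z‖) (hzr : ‖z‖ < r)
    (harg : |arg (z * exp (-(θ : ℂ) * I))| < η / 2) :
    ‖sectorMap θ η z‖ < 1 - (2 : ℝ) ^ (-(π / (2 * η)) - π / 2) * (1 - r) := by
  have hη0 : 0 < η := by linarith [abs_nonneg (arg (z * exp (-(θ : ℂ) * I)))]
  set α := π / (2 * η) with hα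
  have hα1 : 1 < α := by rw [hα, lt_div_iff₀ (by positivity)]; linarith [Real.pi_gt_three]
  set x := z * exp (-(θ : ℂ) * I)
  have hx : ‖x‖ = ‖z‖ := by simp [x, norm_exp]
  set u := x ^ (α : ℂ)
  change ‖(u ^ 2 + 2 * u - 1) / (u ^ 2 - 2 * u - 1)‖ < _
  have hu : ‖u‖ = ‖z‖ ^ α := by rw [norm_cpow_real, hx]
  have hu_lo : (2 : ℝ) ^ (-α) < ‖u‖ := by
    rw [hu, Real.rpow_neg zero_le_two, ← Real.inv_rpow zero_le_two, ← one_div]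
    exact Real.rpow_lt_rpow (by norm_num) hz1 (by linarith)
  have hu_hi : ‖u‖ < r := by
    rw [hu]
    calc ‖z‖ ^ α < ‖z‖ ^ (1 : ℝ) :=
          Real.rpow_lt_rpow_of_exponent_gt (by linarith) (by linarith) hα1
      _ < r := by rwa [Real.rpow_one]
  have hre : √2 / 2 * ‖u‖ ≤ u.re := by
    refine sqrt_two_div_two_mul_norm_le_re_cpow ?_
    rw [abs_mul, abs_of_pos (by linarith : 0 < α)]
    calc |arg x| * α ≤ η / 2 * α := by gcongr
      _ = π / 4 := by rw [hα]; field_simp; ring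
  have hsqrt : 0 < √2 := by positivity
  have hnorm_sq : ‖u‖ ^ 2 < r := by nlinarith [norm_nonneg u]
  rw [lt_sub_comm]
  calc (2 : ℝ) ^ (-α - π / 2) * (1 - r)
      = (2 : ℝ) ^ (-α) * (2 : ℝ) ^ (-(π / 2)) * (1 - r) := by
        rw [sub_eq_add_neg, Real.rpow_add zero_lt_two]
    _ < (2 : ℝ) ^ (-α) * (√2 / 3) * (1 - r) := by
        gcongr
        exact two_rpow_neg_pi_div_two_lt
    _ < ‖u‖ * (√2 / 3) * (1 - ‖u‖ ^ 2) := by gcongr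
    _ ≤ 2 / 3 * u.re * (1 - ‖u‖ ^ 2) := by gcongr ?_ * _ <;> linarith
    _ ≤ 1 - ‖(u ^ 2 + 2 * u - 1) / (u ^ 2 - 2 * u - 1)‖ :=
        two_div_three_mul_re_mul_le_one_sub_norm
          (abs_im_le_re_of_sqrt_two_div_two_mul_norm_le_re hre) (by linarith)

theorem card_sector_solutions_le_general (θ η : ℝ) (hη1 : η < 1)
    {Y : Type*} (w : ℂ → Y) (a : Y)
    (zinv : ℂ → ℂ)
    (hbij : Set.BijOn (sectorMap θ η) (sector θ η) (Metric.ball (0 : ℂ) 1))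
    (hinv : Set.InvOn zinv (sectorMap θ η) (sector θ η) (Metric.ball (0 : ℂ) 1))
    (r : ℝ) (hr1 : r < 1) :
    Set.InjOn (sectorMap θ η)
        {z : ℂ | 1 / 2 < ‖z‖ ∧ ‖z‖ < r ∧
          |Complex.arg (z * Complex.exp (-(θ : ℂ) * Complex.I))| < η / 2 ∧ w z = a} ∧
    Set.MapsTo (sectorMap θ η)
        {z : ℂ | 1 / 2 < ‖z‖ ∧ ‖z‖ < r ∧
          |Complex.arg (z * Complex.exp (-(θ : ℂ) * Complex.I))| < η / 2 ∧ w z = a}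
        {ζ' : ℂ | ‖ζ'‖ < 1 - (2 : ℝ) ^ (-(Real.pi / (2 * η)) - Real.pi / 2) * (1 - r)
          ∧ w (zinv ζ') = a} ∧
    Cardinal.mk
        ↥{z : ℂ | 1 / 2 < ‖z‖ ∧ ‖z‖ < r ∧
          |Complex.arg (z * Complex.exp (-(θ : ℂ) * Complex.I))| < η / 2 ∧ w z = a}
      ≤ Cardinal.mk
        ↥{ζ' : ℂ | ‖ζ'‖ < 1 - (2 : ℝ) ^ (-(Real.pi / (2 * η)) - Real.pi / 2) * (1 - r)
          ∧ w (zinv ζ') = a} := by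
  set S := {z : ℂ | 1 / 2 < ‖z‖ ∧ ‖z‖ < r ∧
    |arg (z * exp (-(θ : ℂ) * I))| < η / 2 ∧ w z = a}
  set T := {ζ' : ℂ | ‖ζ'‖ < 1 - (2 : ℝ) ^ (-(π / (2 * η)) - π / 2) * (1 - r) ∧
    w (zinv ζ') = a}
  have hsub : S ⊆ sector θ η := fun z ⟨hz1, hzr, harg, _⟩ =>
    ⟨by linarith, by linarith, by linarith [abs_nonneg (arg (z * exp (-(θ : ℂ) * I)))]⟩
  have hinj : Set.InjOn (sectorMap θ η) S := hbij.injOn.mono hsub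
  have hmaps : Set.MapsTo (sectorMap θ η) S T := fun z hz =>
    ⟨norm_sectorMap_lt hη1 hr1 hz.1 hz.2.1 hz.2.2.1, (hinv.1 (hsub hz)).symm ▸ hz.2.2.2⟩
  exact ⟨hinj, hmaps, Cardinal.mk_le_of_injective (hmaps.restrict_inj.2 hinj)⟩

/-- Let `ζ` be the conformal map of `G(1,θ,η)` onto the unit disk, with
inverse `z(·)` (`zinv` below). For any function `w` on the sector and any value `a`, and
any `1/2 < r < 1`, the map `ζ` injects the set of solutions of `w(z) = a` in the truncated
half-angle sector `{1/2 < |z| < r, |arg (z e^{-iθ})| < η/2}` into the set of solutions of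
`w(z(ζ)) = a` in the disk `{|ζ| < 1 - 2^{-π/(2η)-π/2}(1-r)}`; in particular the number of
points of the first set does not exceed the number of points of the second. -/
theorem card_sector_solutions_le (θ η : ℝ) (hη0 : 0 < η) (hη1 : η < 1)
    {Y : Type*} (w : ℂ → Y) (a : Y)
    (zinv : ℂ → ℂ)
    (hbij : Set.BijOn (sectorMap θ η) (sector θ η) (Metric.ball (0 : ℂ) 1))
    (hmaps : Set.MapsTo zinv (Metric.ball (0 : ℂ) 1) (sector θ η))
    (hinv : Set.InvOn zinv (sectorMap θ η) (sector θ η) (Metric.ball (0 : ℂ) 1))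
    (r : ℝ) (hr0 : 1 / 2 < r) (hr1 : r < 1) :
    Set.InjOn (sectorMap θ η)
        {z : ℂ | 1 / 2 < ‖z‖ ∧ ‖z‖ < r ∧
          |Complex.arg (z * Complex.exp (-(θ : ℂ) * Complex.I))| < η / 2 ∧ w z = a} ∧
    Set.MapsTo (sectorMap θ η)
        {z : ℂ | 1 / 2 < ‖z‖ ∧ ‖z‖ < r ∧
          |Complex.arg (z * Complex.exp (-(θ : ℂ) * Complex.I))| < η / 2 ∧ w z = a}
        {ζ' : ℂ | ‖ζ'‖ < 1 - (2 : ℝ) ^ (-(Real.pi / (2 * η)) - Real.pi / 2) * (1 - r)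
          ∧ w (zinv ζ') = a} ∧
    Cardinal.mk
        ↥{z : ℂ | 1 / 2 < ‖z‖ ∧ ‖z‖ < r ∧
          |Complex.arg (z * Complex.exp (-(θ : ℂ) * Complex.I))| < η / 2 ∧ w z = a}
      ≤ Cardinal.mk
        ↥{ζ' : ℂ | ‖ζ'‖ < 1 - (2 : ℝ) ^ (-(Real.pi / (2 * η)) - Real.pi / 2) * (1 - r)
          ∧ w (zinv ζ') = a} :=
  card_sector_solutions_le_general θ η hη1 w a zinv hbij hinv r hr1
end

section
/- Let θ ∈ ℝ, 0 < η < 1, α = π/(2η), G(1,θ,η) = {z ∈ ℂ : 0 < |z| < 1 and |arg(z e^{−iθ})| < η}, let ζ : G(1,θ,η) → {|ζ| < 1} be the conformal map ζ(z) = (u² + 2u − 1)/(u² − 2u − 1), u = (z e^{−iθ})^α (principal branch), and let z = z(ζ) be its inverse. Let w be any function on G(1,θ,η) (with values in ℂ, or in the Riemann sphere) and let a be any value. Then for every γ with 0 < γ < 1, the number of points of the set {ζ : |ζ| ≤ γ, w(z(ζ)) = a} does not exceed the number of points of the set {z : |z| < 1 − (η/(8π))(1 − γ), |arg(z e^{−iθ})|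 < η, w(z) = a}; i.e., the map z(·) injects the first solution set into the second. -/
open Complex

/-!
Put `v = z e^{-iθ}` and `u = v^α` with `α = π/(2η)`. Since `|arg v| < η`, the point `u` lies in
the right half-disk, with `‖u‖ = ‖z‖^α`. For the map `ζ = (u² + 2u - 1)/(u² - 2u - 1)` one has
`|u² - 2u - 1|² - |u² + 2u - 1|² = 8 Re u (1 - |u|²)` and `|u² - 2u - 1| > 1`, whence
`1 - |ζ| < 16 (1 - |u|) ≤ 16 α (1 - ‖z‖)` by Bernoulli's inequality. So `|ζ| ≤ γ` forces
`‖z‖ < 1 - (1 - γ)/(16α)`, and `z(·)`, being injective as a right inverse of `ζ(·)`, maps the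
solutions in `{|ζ| ≤ γ}` injectively to solutions in the smaller sector.
-/

open Set Cardinal

/-- The conformal map of the right half-disk `{Re u > 0, |u| < 1}` onto the unit disk. -/
noncomputable def halfDiskMap (u : ℂ) : ℂ :=
  (u ^ 2 + 2 * u - 1) / (u ^ 2 - 2 * u - 1)

theorem sectorMap_eq_halfDiskMap (θ η : ℝ) (z : ℂ) :
    sectorMap θ η z =
      halfDiskMap ((z * exp (-(θ : ℂ) * I)) ^ ((Real.pi / (2 * η) : ℝ) : ℂ)) :=
  rfl

theorem normSq_den_sub_normSq_num_halfDiskMap (u : ℂ) :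
    normSq (u ^ 2 - 2 * u - 1) - normSq (u ^ 2 + 2 * u - 1) = 8 * u.re * (1 - normSq u) := by
  simp only [normSq_apply, sub_re, sub_im, add_re, add_im, mul_re, mul_im, pow_two, one_re,
    one_im, re_ofNat, im_ofNat]
  ring

theorem one_lt_normSq_sq_sub_two_mul_sub_one {u : ℂ} (h0 : 0 < u.re) (h1 : u.re < 1) :
    1 < normSq (u ^ 2 - 2 * u - 1) := by
  have hexpand : normSq (u ^ 2 - 2 * u - 1) =
      (2 - (1 - u.re) ^ 2) ^ 2 + u.im ^ 2 * (2 * (u.re - 1) ^ 2 + 4 + u.im ^ 2) := by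
    simp only [normSq_apply, sub_re, sub_im, mul_re, mul_im, pow_two, one_re, one_im,
      re_ofNat, im_ofNat]
    ring
  have hre : 0 < u.re * (2 - u.re) := mul_pos h0 (by linarith)
  have him : 0 ≤ u.im ^ 2 * (2 * (u.re - 1) ^ 2 + 4 + u.im ^ 2) := by positivity
  rw [hexpand]
  nlinarith

theorem one_sub_norm_halfDiskMap_lt {u : ℂ} (hre : 0 < u.re) (hu : ‖u‖ < 1) :
    1 - ‖halfDiskMap u‖ < 16 * (1 - ‖u‖) := by
  set N := normSq (u ^ 2 + 2 * u - 1)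
  set D := normSq (u ^ 2 - 2 * u - 1)
  have hD : 1 < D := one_lt_normSq_sq_sub_two_mul_sub_one hre ((re_le_norm u).trans_lt hu)
  have hgap : D - N = 8 * u.re * (1 - ‖u‖ ^ 2) := by
    rw [Complex.sq_norm]; exact normSq_den_sub_normSq_num_halfDiskMap u
  have hgap_pos : 0 < D - N := by
    rw [hgap]; have := norm_nonneg u; exact mul_pos (by linarith) (by nlinarith)
  have hsq : ‖halfDiskMap u‖ ^ 2 = N / D := by rw [Complex.sq_norm, halfDiskMap, normSq_div]
  have hle_one : ‖halfDiskMap u‖ ≤ 1 := by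
    rw [← sq_le_one_iff₀ (norm_nonneg _), hsq, div_le_one (by linarith)]; linarith
  calc 1 - ‖halfDiskMap u‖
      ≤ 1 - ‖halfDiskMap u‖ ^ 2 := by nlinarith [norm_nonneg (halfDiskMap u)]
    _ = (D - N) / D := by rw [hsq]; field_simp
    _ < D - N := div_lt_self hgap_pos hD
    _ = 8 * u.re * (1 - ‖u‖) * (1 + ‖u‖) := by rw [hgap]; ring
    _ ≤ 16 * (1 - ‖u‖) := by
      have hre_le : u.re * (1 + ‖u‖) ≤ 2 := by nlinarith [re_le_norm u, norm_nonneg u]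
      nlinarith [mul_le_mul_of_nonneg_left hre_le (by linarith : (0 : ℝ) ≤ 1 - ‖u‖)]

theorem one_sub_rpow_le_mul_one_sub {r p : ℝ} (hr : 0 ≤ r) (hp : 1 ≤ p) :
    1 - r ^ p ≤ p * (1 - r) := by
  have := one_add_mul_self_le_rpow_one_add (s := r - 1) (by linarith) hp
  rw [add_sub_cancel] at this
  linarith

theorem re_cpow_ofReal_pos {v : ℂ} (hv : v ≠ 0) {α : ℝ} (h : |arg v * α| < Real.pi / 2) :
    0 < (v ^ (α : ℂ)).re := by
  rw [cpow_ofReal_re]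
  exact mul_pos (Real.rpow_pos_of_pos (norm_pos_iff.2 hv) α)
    (Real.cos_pos_of_mem_Ioo (abs_lt.1 h))

theorem norm_lt_of_norm_sectorMap_le {θ η γ : ℝ} (hη0 : 0 < η) (hη : η ≤ Real.pi / 2)
    {z : ℂ} (hz : z ∈ sector θ η) (hζ : ‖sectorMap θ η z‖ ≤ γ) :
    ‖z‖ < 1 - (η / (8 * Real.pi)) * (1 - γ) := by
  obtain ⟨hz0, hz1, harg⟩ := hz
  set v := z * exp (-(θ : ℂ) * I)
  set α := Real.pi / (2 * η)
  have hηα : η * α = Real.pi / 2 := by simp only [α]; field_simp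
  have hα : 1 ≤ α := by rw [le_div_iff₀ (by positivity)]; linarith
  have hv : ‖v‖ = ‖z‖ := by
    rw [norm_mul, norm_exp, neg_mul, neg_re, mul_I_re, ofReal_im, neg_zero, neg_zero,
      Real.exp_zero, mul_one]
  have hu_norm : ‖v ^ (α : ℂ)‖ = ‖z‖ ^ α := by rw [norm_cpow_real, hv]
  have hu_re : 0 < (v ^ (α : ℂ)).re := by
    refine re_cpow_ofReal_pos (norm_pos_iff.1 (hv ▸ hz0)) ?_
    rw [abs_mul, abs_of_pos (by positivity : 0 < α), ← hηα]
    exact mul_lt_mul_of_pos_right harg (by positivity)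
  have hu_lt : ‖v ^ (α : ℂ)‖ < 1 := by
    rw [hu_norm]; exact Real.rpow_lt_one hz0.le hz1 (by linarith)
  have hmain : 1 - γ < 16 * α * (1 - ‖z‖) := by
    have := one_sub_norm_halfDiskMap_lt hu_re hu_lt
    rw [← sectorMap_eq_halfDiskMap, hu_norm] at this
    nlinarith [one_sub_rpow_le_mul_one_sub hz0.le hα]
  have hcoef : η / (8 * Real.pi) * (16 * α) = 1 := by
    simp only [α]; field_simp; ring
  have : η / (8 * Real.pi) * (1 - γ) < 1 - ‖z‖ := by
    calc η / (8 * Real.pi) * (1 - γ) < η / (8 * Real.pi) * (16 * α * (1 - ‖z‖)) :=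
          mul_lt_mul_of_pos_left hmain (by positivity)
      _ = 1 - ‖z‖ := by rw [← mul_assoc, hcoef, one_mul]
  linarith

theorem card_disk_solutions_le_general (θ η : ℝ) (hη0 : 0 < η) (hη1 : η < 1)
    {Y : Type*} (w : ℂ → Y) (a : Y)
    (zinv : ℂ → ℂ)
    (hmaps : Set.MapsTo zinv (Metric.ball (0 : ℂ) 1) (sector θ η))
    (hinv : Set.InvOn zinv (sectorMap θ η) (sector θ η) (Metric.ball (0 : ℂ) 1))
    (γ : ℝ) (hγ1 : γ < 1) :
    Set.InjOn zinv {ζ' : ℂ | ‖ζ'‖ ≤ γ ∧ w (zinv ζ') = a} ∧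
    Set.MapsTo zinv {ζ' : ℂ | ‖ζ'‖ ≤ γ ∧ w (zinv ζ') = a}
        {z : ℂ | ‖z‖ < 1 - (η / (8 * Real.pi)) * (1 - γ) ∧
          |Complex.arg (z * Complex.exp (-(θ : ℂ) * Complex.I))| < η ∧ w z = a} ∧
    Cardinal.mk ↥{ζ' : ℂ | ‖ζ'‖ ≤ γ ∧ w (zinv ζ') = a}
      ≤ Cardinal.mk
        ↥{z : ℂ | ‖z‖ < 1 - (η / (8 * Real.pi)) * (1 - γ) ∧
          |Complex.arg (z * Complex.exp (-(θ : ℂ) * Complex.I))| < η ∧ w z = a} := by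
  have hball : {ζ' : ℂ | ‖ζ'‖ ≤ γ ∧ w (zinv ζ') = a} ⊆ Metric.ball 0 1 :=
    fun ζ hζ => mem_ball_zero_iff.2 (hζ.1.trans_lt hγ1)
  have hinj := hinv.2.injOn.mono hball
  have hmapsTo : MapsTo zinv {ζ' : ℂ | ‖ζ'‖ ≤ γ ∧ w (zinv ζ') = a}
      {z : ℂ | ‖z‖ < 1 - (η / (8 * Real.pi)) * (1 - γ) ∧
        |arg (z * exp (-(θ : ℂ) * I))| < η ∧ w z = a} := by
    intro ζ hζ
    have hz := hmaps (hball hζ)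
    refine ⟨norm_lt_of_norm_sectorMap_le hη0 (by linarith [Real.pi_gt_three]) hz ?_, hz.2.2, hζ.2⟩
    rw [hinv.2 (hball hζ)]
    exact hζ.1
  refine ⟨hinj, hmapsTo, ?_⟩
  calc _ = #(zinv '' _) := (mk_image_eq_of_injOn _ _ hinj).symm
    _ ≤ _ := mk_le_mk_of_subset hmapsTo.image_subset

/-- Let `ζ` be the conformal map of `G(1,θ,η)` onto the unit disk, with
inverse `z(·)` (`zinv` below). For any function `w` on the sector and any value `a`, and
any `0 < γ < 1`, the map `z(·)` injects the set of solutions of `w(z(ζ)) = a` in the closed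
disk `{|ζ| ≤ γ}` into the set of solutions of `w(z) = a` in
`{|z| < 1 - (η/(8π))(1-γ), |arg (z e^{-iθ})| < η}`; in particular the number of points of
the first set does not exceed the number of points of the second. -/
theorem card_disk_solutions_le (θ η : ℝ) (hη0 : 0 < η) (hη1 : η < 1)
    {Y : Type*} (w : ℂ → Y) (a : Y)
    (zinv : ℂ → ℂ)
    (hbij : Set.BijOn (sectorMap θ η) (sector θ η) (Metric.ball (0 : ℂ) 1))
    (hmaps : Set.MapsTo zinv (Metric.ball (0 : ℂ) 1) (sector θ η))
    (hinv : Set.InvOn zinv (sectorMap θ η) (sector θ η) (Metric.ball (0 : ℂ) 1))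
    (γ : ℝ) (hγ0 : 0 < γ) (hγ1 : γ < 1) :
    Set.InjOn zinv {ζ' : ℂ | ‖ζ'‖ ≤ γ ∧ w (zinv ζ') = a} ∧
    Set.MapsTo zinv {ζ' : ℂ | ‖ζ'‖ ≤ γ ∧ w (zinv ζ') = a}
        {z : ℂ | ‖z‖ < 1 - (η / (8 * Real.pi)) * (1 - γ) ∧
          |Complex.arg (z * Complex.exp (-(θ : ℂ) * Complex.I))| < η ∧ w z = a} ∧
    Cardinal.mk ↥{ζ' : ℂ | ‖ζ'‖ ≤ γ ∧ w (zinv ζ') = a}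
      ≤ Cardinal.mk
        ↥{z : ℂ | ‖z‖ < 1 - (η / (8 * Real.pi)) * (1 - γ) ∧
          |Complex.arg (z * Complex.exp (-(θ : ℂ) * Complex.I))| < η ∧ w z = a} :=
  card_disk_solutions_le_general θ η hη0 hη1 w a zinv hmaps hinv γ hγ1
end
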